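/- Let G be a countable abelian group, H a Hilbert space, (U^g) a unitary representation, and let p be an ultrafilter on G and ℓ ≥ 1. Then Ker(U^{p+p+⋯+p}) (ℓ summands) = Ker(U^p). Consequently, for 𝒰 ⊆ G* nonempty, (H, U) is 𝒰-mixing if and only if it is ℓ𝒰-mixing, where ℓ𝒰 = {p₁+⋯+p_ℓ : p_i ∈ 𝒰}. -/

import Mathlib

/-- `V` is the weak-operator-topology limit of the operators `U g` along the
ultrafilter `p`. -/
def IsWOTLimit {G : Type*} {H : Type*} [NormedAddCommGroup H] [InnerProductSpace ℂ H]
    (U : G → (H →L[ℂ] H)) (p : Ultrafilter G) (V : H →L[ℂ] H) : Prop :=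
  ∀ f f' : H,
    Filter.Tendsto (fun g => (inner ℂ f (U g f') : ℂ)) (p : Filter G)
      (nhds (inner ℂ f (V f')))

/-- The sum `p + q` of two ultrafilters on an additive group. -/
def ultraAdd {G : Type*} [AddCommGroup G] (p q : Ultrafilter G) : Ultrafilter G :=
  p.bind fun g => q.map fun h => g + h

/-!
All the operators `U g` commute, and weak-operator limits preserve commutation with a fixed
operator. Hence `U^p` commutes with every `U g`, and then with the weak limit of the
`(U g)† = U (-g)`, which is `(U^p)†`: so `U^p` is normal. For a normal operator `ker T² = ker T`,
because `T (T x) = 0` forces `T† (T x) = 0`, i.e. `‖T x‖² = 0`. Weak limits along `p + q` are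
iterated limits, so `U^{p + ⋯ + p} = (U^p)^ℓ` and the kernels agree.
-/

open ContinuousLinearMap Filter Topology

theorem tendsto_ultraAdd {G X : Type*} [AddCommGroup G] [TopologicalSpace X]
    {p q : Ultrafilter G} {F a : G → X} {b : X}
    (hq : ∀ g, Tendsto (fun h => F (g + h)) q (𝓝 (a g))) (hp : Tendsto a p (𝓝 b)) :
    Tendsto F (ultraAdd p q) (𝓝 b) := by
  refine tendsto_nhds.2 fun s hs hb => ?_
  show {g | {h | F (g + h) ∈ s} ∈ q} ∈ p
  filter_upwards [hp.eventually (hs.mem_nhds hb)] with g hg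
  exact hq g (hs.mem_nhds hg)

theorem IsStarNormal.apply_apply_eq_zero_iff {𝕜 E : Type*} [RCLike 𝕜] [NormedAddCommGroup E]
    [InnerProductSpace 𝕜 E] [CompleteSpace E] {T : E →L[𝕜] E} (hT : IsStarNormal T) (x : E) :
    T (T x) = 0 ↔ T x = 0 := by
  refine ⟨fun h => ?_, fun h => by rw [h, map_zero]⟩
  have hadj : adjoint T (T x) = 0 := (hT.adjoint_apply_eq_zero_iff _).2 h
  rw [← inner_self_eq_zero (𝕜 := 𝕜), ← adjoint_inner_right, hadj, inner_zero_right]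

theorem IsStarNormal.pow_succ_apply_eq_zero_iff {𝕜 E : Type*} [RCLike 𝕜] [NormedAddCommGroup E]
    [InnerProductSpace 𝕜 E] [CompleteSpace E] {T : E →L[𝕜] E} (hT : IsStarNormal T) (n : ℕ)
    (x : E) : (T ^ (n + 1)) x = 0 ↔ T x = 0 := by
  induction n generalizing x with
  | zero => rw [pow_one]
  | succ n ih => rw [pow_succ, mul_apply_eq_comp, ih, hT.apply_apply_eq_zero_iff]

namespace IsWOTLimit

variable {G H : Type*} [NormedAddCommGroup H] [InnerProductSpace ℂ H]
  {U : G → H →L[ℂ] H} {p : Ultrafilter G} {V : H →L[ℂ] H}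

theorem unique {W : H →L[ℂ] H} (hV : IsWOTLimit U p V) (hW : IsWOTLimit U p W) : V = W :=
  ext fun x => ext_inner_left ℂ fun f => tendsto_nhds_unique (hV f x) (hW f x)

variable [CompleteSpace H]

theorem adjoint (hV : IsWOTLimit U p V) :
    IsWOTLimit (fun g => ContinuousLinearMap.adjoint (U g)) p (ContinuousLinearMap.adjoint V) :=
  fun f x => by
    simpa only [adjoint_inner_right, RCLike.star_def, inner_conj_symm] using (hV x f).star

theorem commute (hV : IsWOTLimit U p V) {T : H →L[ℂ] H} (hT : ∀ g, Commute (U g) T) :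
    Commute V T := by
  refine ext fun x => ext_inner_left ℂ fun f => tendsto_nhds_unique (hV f (T x)) ?_
  have hTU : ∀ g, T * U g = U g * T := fun g => (hT g).eq.symm
  have hlim := hV (ContinuousLinearMap.adjoint T f) x
  simp only [adjoint_inner_left, ← mul_apply_eq_comp, hTU] at hlim
  exact hlim

theorem ultraAdd_comp [AddCommGroup G] (hrep : ∀ g h, U (g + h) = U g ∘L U h)
    {q : Ultrafilter G} {W : H →L[ℂ] H} (hV : IsWOTLimit U p V) (hW : IsWOTLimit U q W) :
    IsWOTLimit U (ultraAdd p q) (V ∘L W) := fun f x =>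
  tendsto_ultraAdd (fun g => by
      simpa only [adjoint_inner_left, hrep, comp_apply]
        using hW (ContinuousLinearMap.adjoint (U g) f) x)
    (hV f (W x))

end IsWOTLimit

section Representation

variable {G H : Type*} [AddCommGroup G] [NormedAddCommGroup H] [InnerProductSpace ℂ H]
  [CompleteSpace H] {U : G → H →L[ℂ] H}

theorem adjoint_eq_apply_neg (hrep : ∀ g h, U (g + h) = U g ∘L U h)
    (hiso : ∀ g, adjoint (U g) ∘L U g = 1) (g : G) : adjoint (U g) = U (-g) := by
  -- `U 0` is an idempotent isometry, hence the identity.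
  have hzero : U 0 = 1 := by
    have hidem : U 0 * U 0 = U 0 := by rw [mul_def, ← hrep, add_zero]
    have hiso0 : adjoint (U 0) * U 0 = 1 := hiso 0
    calc U 0 = adjoint (U 0) * U 0 * U 0 := by rw [hiso0, one_mul]
      _ = 1 := by rw [mul_assoc, hidem, hiso0]
  refine left_inv_eq_right_inv (hiso g) ?_
  rw [mul_def, ← hrep, add_neg_cancel, hzero]

theorem IsWOTLimit.isStarNormal (hrep : ∀ g h, U (g + h) = U g ∘L U h)
    (hiso : ∀ g, ContinuousLinearMap.adjoint (U g) ∘L U g = 1)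
    {p : Ultrafilter G} {V : H →L[ℂ] H} (hV : IsWOTLimit U p V) : IsStarNormal V := by
  have hcomm : ∀ g h, Commute (U g) (U h) := fun g h => by
    rw [Commute, SemiconjBy, mul_def, mul_def, ← hrep, ← hrep, add_comm]
  have hVU : ∀ h, Commute V (U h) := fun h => hV.commute fun g => hcomm g h
  refine (isStarNormal_iff V).2 ?_
  rw [star_eq_adjoint]
  exact hV.adjoint.commute fun g => by
    rw [adjoint_eq_apply_neg hrep hiso]
    exact (hVU (-g)).symm

theorem foldl_ultraAdd (hrep : ∀ g h, U (g + h) = U g ∘L U h)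
    {Ulim : Ultrafilter G → H →L[ℂ] H} (hUlim : ∀ p, IsWOTLimit U p (Ulim p))
    (l : List (Ultrafilter G)) (q : Ultrafilter G) :
    Ulim (l.foldl ultraAdd q) = Ulim q * (l.map Ulim).prod := by
  induction l generalizing q with
  | nil => simp
  | cons a l ih =>
    rw [List.foldl_cons, ih, (hUlim _).unique ((hUlim q).ultraAdd_comp hrep (hUlim a)),
      List.map_cons, List.prod_cons, ← mul_def, mul_assoc]

end Representation

theorem stmt_12_general {G : Type*} [AddCommGroup G]
    {H : Type*} [NormedAddCommGroup H] [InnerProductSpace ℂ H] [CompleteSpace H]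
    (U : G → (H →L[ℂ] H))
    (hrep : ∀ g h : G, U (g + h) = U g ∘L U h)
    (hunit : ∀ g : G,
      ContinuousLinearMap.adjoint (U g) ∘L U g = 1 ∧
        U g ∘L ContinuousLinearMap.adjoint (U g) = 1)
    (Ulim : Ultrafilter G → (H →L[ℂ] H))
    (hUlim : ∀ p : Ultrafilter G, IsWOTLimit U p (Ulim p)) :
    (∀ (p : Ultrafilter G) (ℓ : ℕ),
        LinearMap.ker ((Ulim ((List.replicate ℓ p).foldl ultraAdd p) : H →ₗ[ℂ] H)) =
          LinearMap.ker ((Ulim p : H →ₗ[ℂ] H))) ∧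
      ∀ (𝒰 : Set (Ultrafilter G)) (ℓ : ℕ), 𝒰.Nonempty → 1 ≤ ℓ →
        (∀ p ∈ 𝒰, ∀ g : G, p ≠ (pure g : Ultrafilter G)) →
        ((∀ q ∈ 𝒰, ∀ f : H, Ulim q f = 0) ↔
          (∀ q ∈ 𝒰, ∀ l : List (Ultrafilter G), l.length + 1 = ℓ →
            (∀ r ∈ l, r ∈ 𝒰) → ∀ f : H, Ulim (l.foldl ultraAdd q) f = 0)) := by
  have hnormal (p : Ultrafilter G) : IsStarNormal (Ulim p) :=
    (hUlim p).isStarNormal hrep fun g => (hunit g).1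
  have hpow (p : Ultrafilter G) (ℓ : ℕ) :
      Ulim ((List.replicate ℓ p).foldl ultraAdd p) = Ulim p ^ (ℓ + 1) := by
    rw [foldl_ultraAdd hrep hUlim, List.map_replicate, List.prod_replicate, ← pow_succ']
  refine ⟨fun p ℓ => ?_, fun 𝒰 ℓ _ hℓ _ => ⟨fun hmix q hq l _ _ f => ?_, fun hmix q hq f => ?_⟩⟩
  · ext f
    rw [LinearMap.mem_ker, LinearMap.mem_ker, coe_coe, coe_coe, hpow]
    exact (hnormal p).pow_succ_apply_eq_zero_iff ℓ f
  · rw [foldl_ultraAdd hrep hUlim, show Ulim q = 0 from ext (hmix q hq), zero_mul, zero_apply]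
  · obtain ⟨n, rfl⟩ := Nat.exists_eq_add_of_le' hℓ
    have hrepl := hmix q hq (List.replicate n q) (by simp)
      (fun r hr => List.eq_of_mem_replicate hr ▸ hq) f
    rw [hpow] at hrepl
    exact ((hnormal q).pow_succ_apply_eq_zero_iff n f).1 hrepl

/-- For a unitary representation of a countable abelian group:
`Ker U^{p+⋯+p}` (any number `ℓ ≥ 1` of summands) equals `Ker U^p`; consequently,
for any nonempty set `𝒰` of nonprincipal ultrafilters and any `ℓ ≥ 1`, being
`𝒰`-mixing is equivalent to being `ℓ𝒰`-mixing. -/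
theorem stmt_12 {G : Type*} [AddCommGroup G] [Countable G]
    {H : Type*} [NormedAddCommGroup H] [InnerProductSpace ℂ H] [CompleteSpace H]
    (U : G → (H →L[ℂ] H))
    (hrep : ∀ g h : G, U (g + h) = U g ∘L U h) (hzero : U 0 = 1)
    (hunit : ∀ g : G,
      ContinuousLinearMap.adjoint (U g) ∘L U g = 1 ∧
        U g ∘L ContinuousLinearMap.adjoint (U g) = 1)
    (Ulim : Ultrafilter G → (H →L[ℂ] H))
    (hUlim : ∀ p : Ultrafilter G, IsWOTLimit U p (Ulim p)) :
    (∀ (p : Ultrafilter G) (ℓ : ℕ),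
        LinearMap.ker ((Ulim ((List.replicate ℓ p).foldl ultraAdd p) : H →ₗ[ℂ] H)) =
          LinearMap.ker ((Ulim p : H →ₗ[ℂ] H))) ∧
      ∀ (𝒰 : Set (Ultrafilter G)) (ℓ : ℕ), 𝒰.Nonempty → 1 ≤ ℓ →
        (∀ p ∈ 𝒰, ∀ g : G, p ≠ (pure g : Ultrafilter G)) →
        ((∀ q ∈ 𝒰, ∀ f : H, Ulim q f = 0) ↔
          (∀ q ∈ 𝒰, ∀ l : List (Ultrafilter G), l.length + 1 = ℓ →
            (∀ r ∈ l, r ∈ 𝒰) → ∀ f : H, Ulim (l.foldl ultraAdd q) f = 0)) :=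
  stmt_12_general U hrep hunit Ulim hUlim
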